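/- arXiv:2304.12068 — 5 statements merged into one kernel-verified Lean document; each statement's English description precedes it below -/
import Mathlib

section
/- For all integers A > B ≥ 1, the ideal of R generated by x − y^A and x − y^B equals the ideal of R generated by x and y^B, and consequently the quotient ring R/(x − y^A, x − y^B) has dimension B as a κ-vector space. -/
/-!
Since `y` lies in the maximal ideal of the local ring `R`, the element `1 - y^(A-B)` is a unit,
and `x - y^A = (1 - y^(A-B)) y^B + (x - y^B)` gives `(x - y^A, x - y^B) = (x, y^B)`.
The radical of `(x, y^B)` is the maximal ideal `(x, y)`, so modulo `(x, y^B)` every polynomial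
not vanishing at the origin is already a unit. Hence `R/(x, y^B) = κ[x,y]/(x, y^B) ≅ κ[y]/(y^B)`,
which has dimension `B`.
-/

open MvPolynomial

/-- The ideal `(x, y)` of the polynomial ring `κ[x,y]`. -/
noncomputable abbrev xyIdeal (κ : Type) [Field κ] : Ideal (MvPolynomial (Fin 2) κ) :=
  Ideal.span {X 0, X 1}

theorem xyIdeal_eq_ker (κ : Type) [Field κ] :
    xyIdeal κ = RingHom.ker (constantCoeff : MvPolynomial (Fin 2) κ →+* κ) := by
  have hset : ({X 0, X 1} : Set (MvPolynomial (Fin 2) κ)) = X '' Set.univ := by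
    ext y
    simp only [Set.image_univ, Set.mem_insert_iff, Set.mem_singleton_iff, Set.mem_range]
    constructor
    · rintro (rfl | rfl)
      exacts [⟨0, rfl⟩, ⟨1, rfl⟩]
    · rintro ⟨i, rfl⟩
      fin_cases i
      · exact Or.inl rfl
      · exact Or.inr rfl
  ext x
  rw [xyIdeal, hset, MvPolynomial.mem_ideal_span_X_image, RingHom.mem_ker]
  rw [show (constantCoeff : MvPolynomial (Fin 2) κ →+* κ) x = coeff 0 x from rfl]
  constructor
  · intro h
    by_contra hc
    obtain ⟨i, -, hi⟩ := h 0 (MvPolynomial.mem_support_iff.mpr hc)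
    exact hi rfl
  · intro h m hm
    by_contra hc
    push_neg at hc
    have : m = 0 := by
      ext i
      simpa using hc i (Set.mem_univ i)
    rw [this] at hm
    exact (MvPolynomial.mem_support_iff.mp hm) h

/-- The ideal `(x, y)` is prime (indeed maximal), being the kernel of the evaluation
at the origin. -/
instance xyIdeal_isPrime (κ : Type) [Field κ] : (xyIdeal κ).IsPrime := by
  rw [xyIdeal_eq_ker]
  exact RingHom.ker_isPrime _

/-- `R`, the localization of `κ[x,y]` at the maximal ideal `(x, y)`. -/
noncomputable abbrev Rloc (κ : Type) [Field κ] : Type :=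
  Localization.AtPrime (xyIdeal κ)

/-- The image of `x` in `R`. -/
noncomputable def xR (κ : Type) [Field κ] : Rloc κ :=
  algebraMap (MvPolynomial (Fin 2) κ) (Rloc κ) (X 0)

/-- The image of `y` in `R`. -/
noncomputable def yR (κ : Type) [Field κ] : Rloc κ :=
  algebraMap (MvPolynomial (Fin 2) κ) (Rloc κ) (X 1)

namespace Ideal

variable {R : Type*} [CommRing R]

theorem span_pair_sub_mul_eq {x b c : R} (hc : IsUnit (1 - c)) :
    span {x - c * b, x - b} = span {x, b} := by
  rw [show x - c * b = (1 - c) * b + (x - b) by ring, span_pair_add_right, span_insert,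
    span_singleton_mul_left_unit hc, ← span_insert, span_pair_sub_left, span_pair_comm]

theorem Quotient.isUnit_mk_of_le_radical {I P : Ideal R} [P.IsMaximal] (hP : P ≤ I.radical)
    {s : R} (hs : s ∉ P) : IsUnit (Quotient.mk I s) := by
  obtain ⟨a, i, hi, hasi⟩ := IsMaximal.exists_inv ‹_› hs
  obtain ⟨n, hn⟩ := hP hi
  have hnil : IsNilpotent (Quotient.mk I i) :=
    ⟨n, by rw [← map_pow, Quotient.eq_zero_iff_mem]; exact hn⟩
  have hunit : IsUnit (Quotient.mk I a * Quotient.mk I s) := by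
    rw [← map_mul, eq_sub_of_add_eq hasi, map_sub, map_one]
    exact hnil.isUnit_one_sub
  exact isUnit_of_mul_isUnit_right hunit

end Ideal

namespace IsLocalization.AtPrime

variable {R S : Type*} [CommRing R] [CommRing S] [Algebra R S] (P : Ideal R) [P.IsMaximal]
  [IsLocalization.AtPrime S P] {I : Ideal R}

theorem bijective_algebraMap_quotient (hP : P ≤ I.radical) :
    Function.Bijective (algebraMap (R ⧸ I) (S ⧸ I.map (algebraMap R S))) :=
  (atUnits (R ⧸ I) (Algebra.algebraMapSubmonoid (R ⧸ I) P.primeCompl)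
    (S := S ⧸ I.map (algebraMap R S)) (by
      rintro _ ⟨s, hs, rfl⟩
      exact Ideal.Quotient.isUnit_mk_of_le_radical hP hs)).bijective

noncomputable def quotientAlgEquivOfLERadical (k : Type*) [CommRing k] [Algebra k R] [Algebra k S]
    [IsScalarTower k R S] (hP : P ≤ I.radical) :
    (R ⧸ I) ≃ₐ[k] S ⧸ I.map (algebraMap R S) :=
  AlgEquiv.ofBijective (Ideal.quotientMapₐ _ (IsScalarTower.toAlgHom k R S) Ideal.le_comap_map)
    (bijective_algebraMap_quotient (S := S) P hP)

end IsLocalization.AtPrime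

section

variable (κ : Type) [Field κ]

instance xyIdeal_isMaximal : (xyIdeal κ).IsMaximal := by
  rw [xyIdeal_eq_ker]
  exact RingHom.ker_isMaximal_of_surjective _ fun c => ⟨C c, constantCoeff_C _ c⟩

theorem xyIdeal_le_radical_span_X_pow (n : ℕ) :
    xyIdeal κ ≤ (Ideal.span {(X 0 : MvPolynomial (Fin 2) κ), X 1 ^ n}).radical := by
  rw [xyIdeal, Ideal.span_le, Set.insert_subset_iff, Set.singleton_subset_iff]
  exact ⟨Ideal.le_radical (Ideal.subset_span (by simp)), n, Ideal.subset_span (by simp)⟩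

noncomputable def quotientSpanXPowAlgEquiv (n : ℕ) :
    (MvPolynomial (Fin 2) κ ⧸ Ideal.span {(X 0 : MvPolynomial (Fin 2) κ), X 1 ^ n}) ≃ₐ[κ]
      Polynomial κ ⧸ Ideal.span {(Polynomial.X : Polynomial κ) ^ n} :=
  AlgEquiv.ofAlgHom
    (Ideal.quotientMapₐ _ (aeval ![0, Polynomial.X]) (by
      rw [← Ideal.map_le_iff_le_comap, Ideal.map_span, Set.image_pair]
      simp))
    (Ideal.quotientMapₐ _ (Polynomial.aeval (X 1)) (by
      rw [← Ideal.map_le_iff_le_comap, Ideal.map_span, Set.image_singleton, Ideal.span_le]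
      simpa using Ideal.subset_span (by simp)))
    (Ideal.Quotient.algHom_ext _ <| Polynomial.algHom_ext <| by simp)
    (Ideal.Quotient.algHom_ext _ <| MvPolynomial.algHom_ext fun i => by
      fin_cases i
      · simpa using (Ideal.Quotient.eq_zero_iff_mem.mpr
          (Ideal.subset_span (Set.mem_insert (X 0 : MvPolynomial (Fin 2) κ) {X 1 ^ n}))).symm
      · simp)

theorem finrank_quotient_span_xR_yR_pow (n : ℕ) :
    Module.finrank κ (Rloc κ ⧸ Ideal.span {xR κ, yR κ ^ n}) = n := by
  have hmap : (Ideal.span {(X 0 : MvPolynomial (Fin 2) κ), X 1 ^ n}).map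
      (algebraMap _ (Rloc κ)) = Ideal.span {xR κ, yR κ ^ n} := by
    rw [Ideal.map_span, Set.image_pair, map_pow, xR, yR]
  rw [← hmap, ← (IsLocalization.AtPrime.quotientAlgEquivOfLERadical (xyIdeal κ) κ
      (xyIdeal_le_radical_span_X_pow κ n)).toLinearEquiv.finrank_eq,
    (quotientSpanXPowAlgEquiv κ n).toLinearEquiv.finrank_eq,
    finrank_quotient_span_eq_natDegree, Polynomial.natDegree_X_pow]

theorem isUnit_one_sub_yR_pow {n : ℕ} (hn : 0 < n) : IsUnit (1 - yR κ ^ n) := by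
  have hy : yR κ ∈ IsLocalRing.maximalIdeal (Rloc κ) :=
    (IsLocalization.AtPrime.to_map_mem_maximal_iff (Rloc κ) (xyIdeal κ) (X 1)).mpr
      (Ideal.subset_span (by simp))
  exact IsLocalRing.isUnit_one_sub_self_of_mem_nonunits _ (Ideal.pow_mem_of_mem _ hy n hn)

end

theorem stmt_2_general (κ : Type) [Field κ] (A B : ℕ) (hAB : B < A) :
    Ideal.span {xR κ - yR κ ^ A, xR κ - yR κ ^ B} = Ideal.span {xR κ, yR κ ^ B} ∧
    Module.finrank κ
      (Rloc κ ⧸ Ideal.span {xR κ - yR κ ^ A, xR κ - yR κ ^ B}) = B := by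
  have hspan : Ideal.span {xR κ - yR κ ^ A, xR κ - yR κ ^ B} = Ideal.span {xR κ, yR κ ^ B} := by
    rw [← pow_sub_mul_pow (yR κ) hAB.le]
    exact Ideal.span_pair_sub_mul_eq (isUnit_one_sub_yR_pow κ (Nat.sub_pos_of_lt hAB))
  exact ⟨hspan, hspan ▸ finrank_quotient_span_xR_yR_pow κ B⟩

/-- For integers `A > B ≥ 1`, in the localization `R` of `κ[x,y]` at the maximal ideal `(x,y)`
one has the equality of ideals `(x - y^A, x - y^B) = (x, y^B)`, and consequently the quotient
ring `R/(x - y^A, x - y^B)` has dimension `B` as a `κ`-vector space. -/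
theorem stmt_2 (κ : Type) [Field κ] (A B : ℕ) (hB : 1 ≤ B) (hAB : B < A) :
    Ideal.span {xR κ - yR κ ^ A, xR κ - yR κ ^ B} = Ideal.span {xR κ, yR κ ^ B} ∧
    Module.finrank κ
      (Rloc κ ⧸ Ideal.span {xR κ - yR κ ^ A, xR κ - yR κ ^ B}) = B :=
  stmt_2_general κ A B hAB
end

section
/- For every prime p, every integer n ≥ 2 and every integer a with 1 ≤ a ≤ n−1, (p−1)·Σ_{a'∈{0,…,n}, a'≠a} φ(p^{min(a', n−a')})·c(a,a') = 2·p^{|n−2a|}·φ(p^{min(a, n−a)}), where c(a,a') = p^{min(|n−2a|,|n−2a'|)} if (n−2a)(n−2a') > 0 and c(a,a') = 1 otherwise. (This is the weighted row identity for an interior Igusa component C′_a of the special fibre of the Edixhoven model of X₀(pⁿM), underlying its self-intersection formula.) -/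
/-!
Assume `2a ≤ n`, the other case following from the symmetry `a ↦ n - a`. Then the weight
`c(a,a')` is `p^(n - 2 max(a,a'))` with truncated subtraction. The terms with `a' < a` add up to
`p^(n-2a) · Σ_{a'<a} φ(p^a') = p^(n-a-1)`. The terms with `a' > a` add up to `p^(n-a-1)` as
well, since the tail sums `T(s) = Σ_{a' ≥ s} φ(p^min(a',n-a')) p^(n-2a')` satisfy
`T(s) = p^(n-s)`: this follows by downward induction from `φ(p^(j+1)) p^k + p^(j+k) = p^(j+k+1)`.
-/

open Finset Nat

theorem sum_range_totient_prime_pow {p : ℕ} (hp : p.Prime) (K : ℕ) :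
    ∑ k ∈ range (K + 1), φ (p ^ k) = p ^ K := by
  rw [← Nat.sum_divisors_prime_pow hp, Nat.sum_totient]

theorem totient_prime_pow_succ_mul_add_pow {p : ℕ} (hp : p.Prime) (j k : ℕ) :
    φ (p ^ (j + 1)) * p ^ k + p ^ (j + k) = p ^ (j + k + 1) := by
  obtain ⟨q, rfl⟩ : ∃ q, p = q + 1 := ⟨p - 1, (Nat.sub_add_cancel hp.one_lt.le).symm⟩
  rw [Nat.totient_prime_pow_succ hp, Nat.add_sub_cancel]
  ring

theorem sum_Ico_totient_prime_pow_min_mul {p : ℕ} (hp : p.Prime) {n s : ℕ} (hs : 1 ≤ s)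
    (hsn : s ≤ n) :
    ∑ x ∈ Ico s (n + 1), φ (p ^ min x (n - x)) * p ^ (n - 2 * x) = p ^ (n - s) := by
  induction hsn using Nat.decreasingInduction with
  | self => simp [Nat.sub_eq_zero_of_le (Nat.le_mul_of_pos_left n two_pos)]
  | of_succ s hsn ih =>
    rw [sum_eq_sum_Ico_succ_bot (by omega), ih (by omega)]
    rcases lt_or_ge (2 * s) n with hs2 | hs2
    · obtain ⟨j, rfl⟩ : ∃ j, s = j + 1 := ⟨s - 1, by omega⟩
      rw [min_eq_left (by omega), show n - (j + 1 + 1) = j + (n - 2 * (j + 1)) by omega,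
        show n - (j + 1) = j + (n - 2 * (j + 1)) + 1 by omega]
      exact totient_prime_pow_succ_mul_add_pow hp j _
    · obtain ⟨j, hj⟩ : ∃ j, n - s = j + 1 := ⟨n - s - 1, by omega⟩
      rw [min_eq_right (by omega), Nat.sub_eq_zero_of_le hs2, hj,
        show n - (s + 1) = j + 0 by omega]
      exact totient_prime_pow_succ_mul_add_pow hp j 0

def rowEntry (p n a a' : ℕ) : ℕ :=
  φ (p ^ min a' (n - a')) *
    (if 0 < ((n : ℤ) - 2 * a) * ((n : ℤ) - 2 * a') then
      p ^ min ((n : ℤ) - 2 * a).natAbs ((n : ℤ) - 2 * a').natAbs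
    else 1)

theorem rowEntry_of_lt {p n a x : ℕ} (ha : 2 * a ≤ n) (hx : x < a) :
    rowEntry p n a x = φ (p ^ x) * p ^ (n - 2 * a) := by
  rw [rowEntry, min_eq_left (by omega)]
  rcases ha.lt_or_eq with ha | rfl
  · rw [if_pos (mul_pos (by omega) (by omega))]
    congr 2
    omega
  · simp

theorem rowEntry_of_gt {p n a x : ℕ} (ha : 2 * a ≤ n) (hx : a < x) :
    rowEntry p n a x = φ (p ^ min x (n - x)) * p ^ (n - 2 * x) := by
  rw [rowEntry]
  rcases lt_or_ge (2 * x) n with hxn | hxn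
  · rw [if_pos (mul_pos (by omega) (by omega))]
    congr 2
    omega
  · rw [if_neg (not_lt.2 (mul_nonpos_of_nonneg_of_nonpos (by omega) (by omega))),
      Nat.sub_eq_zero_of_le hxn, pow_zero]

theorem rowEntry_reflect {p n a x : ℕ} (ha : a ≤ n) (hx : x ≤ n) :
    rowEntry p n (n - a) (n - x) = rowEntry p n a x := by
  have hneg : ∀ y ≤ n, (n : ℤ) - 2 * ((n - y : ℕ) : ℤ) = -((n : ℤ) - 2 * y) := by
    intro y hy
    omega
  rw [rowEntry, rowEntry, hneg a ha, hneg x hx, neg_mul_neg, Int.natAbs_neg, Int.natAbs_neg,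
    Nat.sub_sub_self hx, min_comm]

theorem sum_rowEntry_of_two_mul_le {p n a : ℕ} (hp : p.Prime) (ha : 1 ≤ a) (han : 2 * a ≤ n) :
    ∑ x ∈ (range (n + 1)).erase a, rowEntry p n a x = 2 * p ^ (n - a - 1) := by
  have hsplit : (range (n + 1)).erase a = range a ∪ Ico (a + 1) (n + 1) := by
    ext x
    simp only [mem_erase, mem_range, mem_union, mem_Ico]
    omega
  have hdisj : Disjoint (range a) (Ico (a + 1) (n + 1)) :=
    disjoint_left.2 fun x hx hx' => by simp only [mem_range, mem_Ico] at hx hx'; omega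
  have hlower : ∑ x ∈ range a, rowEntry p n a x = p ^ (n - a - 1) := by
    obtain ⟨K, rfl⟩ : ∃ K, a = K + 1 := ⟨a - 1, by omega⟩
    rw [sum_congr rfl fun x hx => rowEntry_of_lt han (mem_range.1 hx), ← sum_mul,
      sum_range_totient_prime_pow hp, ← pow_add]
    congr 1
    omega
  have hupper : ∑ x ∈ Ico (a + 1) (n + 1), rowEntry p n a x = p ^ (n - a - 1) := by
    rw [sum_congr rfl fun x hx => rowEntry_of_gt han (mem_Ico.1 hx).1,
      sum_Ico_totient_prime_pow_min_mul hp (by omega) (by omega)]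
    rfl
  rw [hsplit, sum_union hdisj, hlower, hupper, two_mul]

theorem sum_rowEntry {p n a : ℕ} (hp : p.Prime) (ha1 : 1 ≤ a) (ha2 : a < n) :
    ∑ x ∈ (range (n + 1)).erase a, rowEntry p n a x = 2 * p ^ (n - min a (n - a) - 1) := by
  rcases le_or_gt (2 * a) n with han | han
  · rw [sum_rowEntry_of_two_mul_le hp ha1 han, min_eq_left (by omega)]
  · have hreflect : ∑ x ∈ (range (n + 1)).erase a, rowEntry p n a x =
        ∑ x ∈ (range (n + 1)).erase (n - a), rowEntry p n (n - a) x := by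
      refine sum_nbij' (n - ·) (n - ·) ?_ ?_ ?_ ?_ ?_ <;> intro x hx <;>
        simp only [mem_erase, mem_range] at hx ⊢
      · omega
      · omega
      · omega
      · omega
      · exact (rowEntry_reflect ha2.le (by omega)).symm
    rw [hreflect, sum_rowEntry_of_two_mul_le hp (by omega) (by omega), min_eq_right (by omega)]

theorem stmt_4_general (p n a : ℕ) (hp : p.Prime) (ha1 : 1 ≤ a) (ha2 : a ≤ n - 1) :
    (p - 1) *
      ∑ a' ∈ (Finset.range (n + 1)).erase a,
        Nat.totient (p ^ min a' (n - a')) *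
          (if 0 < ((n : ℤ) - 2 * a) * ((n : ℤ) - 2 * a') then
            p ^ min ((n : ℤ) - 2 * a).natAbs ((n : ℤ) - 2 * a').natAbs
          else 1)
      = 2 * p ^ ((n : ℤ) - 2 * a).natAbs * Nat.totient (p ^ min a (n - a)) := by
  change (p - 1) * ∑ a' ∈ (range (n + 1)).erase a, rowEntry p n a a' = _
  set m := min a (n - a) with hm
  obtain ⟨k, hk⟩ : ∃ k, m = k + 1 := ⟨m - 1, by omega⟩
  have habs : ((n : ℤ) - 2 * a).natAbs = n - 2 * m := by omega
  have hexp : n - m - 1 = (n - 2 * m) + k := by omega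
  rw [sum_rowEntry hp ha1 (by omega), ← hm, habs, hexp, hk, Nat.totient_prime_pow_succ hp, pow_add]
  ring

/-- For every prime `p`, every integer `n ≥ 2` and every `1 ≤ a ≤ n−1`,
`(p−1)·Σ_{a'∈{0,…,n}, a'≠a} φ(p^{min(a', n−a')})·c(a,a') = 2·p^{|n−2a|}·φ(p^{min(a, n−a)})`,
where `c(a,a') = p^{min(|n−2a|,|n−2a'|)}` if `(n−2a)(n−2a') > 0` and `c(a,a') = 1`
otherwise (`φ` is Euler's totient function).  This is the weighted row identity for an
interior Igusa component `C′_a` of the special fibre of the Edixhoven model of `X₀(pⁿM)`. -/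
theorem stmt_4 (p n a : ℕ) (hp : p.Prime) (hn : 2 ≤ n) (ha1 : 1 ≤ a) (ha2 : a ≤ n - 1) :
    (p - 1) *
      ∑ a' ∈ (Finset.range (n + 1)).erase a,
        Nat.totient (p ^ min a' (n - a')) *
          (if 0 < ((n : ℤ) - 2 * a) * ((n : ℤ) - 2 * a') then
            p ^ min ((n : ℤ) - 2 * a).natAbs ((n : ℤ) - 2 * a').natAbs
          else 1)
      = 2 * p ^ ((n : ℤ) - 2 * a).natAbs * Nat.totient (p ^ min a (n - a)) :=
  stmt_4_general p n a hp ha1 ha2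
end

section
/- As N → ∞ along integers N > 1 coprime to 6, Σ_{p | N} f(p, n_p, M_p)·log p/(12·d(N)·(p−1)) = o(g(N)·log N); that is, the total correction term to the vertical contribution of the self-intersection of the Arakelov canonical sheaf is negligible compared to g(N)·log N. -/
open Finset Filter

/-- The multiplicative arithmetic function with `d 1 = 1` and `d (q^r) = q^(r-1) * (q+1)`
on prime powers `q^r`. -/
def dArith (m : ℕ) : ℕ :=
  ∏ q ∈ m.primeFactors, q ^ (m.factorization q - 1) * (q + 1)

/-- The multiplicative arithmetic function ε₂ with `ε₂ 1 = 1`, `ε₂ (2^r) = 0` for `r ≥ 2` and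
`ε₂ (q^r) = 1 + (−1/q)` (Kronecker symbol) otherwise; for odd `q` the Kronecker symbol
`(−1/q)` is the Jacobi symbol, and `(−1/2) = 1 = jacobiSym (-1) 2`. -/
def eps2 (m : ℕ) : ℕ :=
  ∏ q ∈ m.primeFactors,
    if q = 2 ∧ 2 ≤ m.factorization q then 0 else (1 + jacobiSym (-1) q).toNat

/-- The multiplicative arithmetic function ε₃ with `ε₃ 1 = 1`, `ε₃ (3^r) = 0` for `r ≥ 2` and
`ε₃ (q^r) = 1 + (−3/q)` (Kronecker symbol) otherwise; for odd `q` the Kronecker symbol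
`(−3/q)` is the Jacobi symbol, and `(−3/2) = −1`, so the factor at `q = 2` vanishes. -/
def eps3 (m : ℕ) : ℕ :=
  ∏ q ∈ m.primeFactors,
    if q = 3 ∧ 2 ≤ m.factorization q then 0
    else if q = 2 then 0 else (1 + jacobiSym (-3) q).toNat

/-- The multiplicative arithmetic function ε_∞ with `ε_∞ 1 = 1`,
`ε_∞ (q^r) = q^(r/2−1) * (q+1)` for even `r` and `ε_∞ (q^r) = 2 * q^((r−1)/2)` for odd `r`. -/
def epsInf (m : ℕ) : ℕ :=
  ∏ q ∈ m.primeFactors,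
    if Even (m.factorization q) then q ^ (m.factorization q / 2 - 1) * (q + 1)
    else 2 * q ^ ((m.factorization q - 1) / 2)

/-- `g(m) = 1 + d(m)/12 − ε₂(m)/4 − ε₃(m)/3 − ε_∞(m)/2`, the genus of the modular curve
`X₀(m)` for `m > 2` coprime to 6. -/
def genusX0 (m : ℕ) : ℚ :=
  1 + (dArith m : ℚ) / 12 - (eps2 m : ℚ) / 4 - (eps3 m : ℚ) / 3 - (epsInf m : ℚ) / 2

/-- The quantity `f(p,n,M)`. -/
noncomputable def fCorr (p n M : ℕ) : ℚ :=
  let N := p ^ n * M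
  let D : ℚ := (dArith N : ℚ)
  let P : ℚ := (p : ℚ)
  let ξ3 : ℚ := if p % 3 = 1 then 0 else 1
  2 * D ^ 2 - 8 * D * (dArith M : ℚ) * (P ^ (n - 1) - 1)
    - 6 * ((n : ℚ) * (P - 1) - 4) * D * (epsInf N : ℚ) - 96 * D * (epsInf M : ℚ)
    - (3 * ((eps2 N : ℚ) + 2 * (eps3 N : ℚ) - 4) * (n : ℚ) - 2 * (eps3 N : ℚ)
        + 2 * (1 + (-1 : ℚ) ^ n) * (ξ3 * (eps3 M : ℚ) - 9 * (if M = 1 then (1 : ℚ) else 0)))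
      * D * (P - 1)
    + 4 * (12 - 3 * (eps2 N : ℚ) - 4 * (eps3 N : ℚ)) * D
    + 144 * (dArith (p ^ n) : ℚ) * ((epsInf M : ℚ)) ^ 2
    + 12 * ((n : ℚ) * (P - 1) + 2) * (3 * (eps2 N : ℚ) + 4 * (eps3 N : ℚ) - 12) * (epsInf N : ℚ)
    + 2 * ((n : ℚ) * (P - 1) + 2) *
        (9 * (eps2 N : ℚ) * ((eps2 M : ℚ) - 4) + 16 * (eps3 N : ℚ) * ((eps3 M : ℚ) - 3)
          + 12 * (eps2 N : ℚ) * (eps3 N : ℚ))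

/-!
Each of `ε₂, ε₃, ε_∞` satisfies `ε(m)² m ≤ d(m)²`, already locally at every prime power.
Hence `g(N) ≥ d(N)/24` once `N ≥ 26²`, and, bounding the terms of `f` one by one,
`|f(p, n, M)| = O(d(N)² (1 + n(p-1)/√N))`. The `p`-th summand is then
`O(d(N) (log p/(p-1) + n_p log p/√N))`; as `∑ n_p log p = log N` and
`∑_{p ∣ N} log p/(p-1) ≤ K + log N / K` for every `K ≥ 1` (split at `p ≤ K`), the quotient
by `g(N) log N` is `O(K / log N + 1/K + 1/√N)`.
-/

theorem dArith_pos (m : ℕ) : 0 < dArith m :=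
  prod_pos fun q hq => by have := (Nat.prime_of_mem_primeFactors hq).pos; positivity

theorem pow_le_pow_pred_mul_succ (q r : ℕ) : q ^ r ≤ q ^ (r - 1) * (q + 1) := by
  rcases Nat.eq_zero_or_pos r with rfl | hr
  · simp
  · calc q ^ r = q ^ (r - 1) * q := by rw [← pow_succ, Nat.sub_add_cancel hr]
      _ ≤ q ^ (r - 1) * (q + 1) := Nat.mul_le_mul_left _ q.le_succ

theorem prod_primeFactors_le_prod (m : ℕ) {a b : ℕ → ℕ → ℕ}
    (hab : ∀ q r, q.Prime → 1 ≤ r → a q r ≤ b q r) :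
    ∏ q ∈ m.primeFactors, a q (m.factorization q) ≤
      ∏ q ∈ m.primeFactors, b q (m.factorization q) :=
  prod_le_prod' fun q hq => by
    obtain ⟨hp, hd, hm⟩ := Nat.mem_primeFactors.mp hq
    exact hab q _ hp (hp.factorization_pos_of_dvd hm hd)

theorem le_dArith {m : ℕ} (hm : m ≠ 0) : m ≤ dArith m := by
  conv_lhs => rw [Nat.prod_primeFactors_pow_factorization hm]
  exact prod_primeFactors_le_prod m fun q r _ _ => pow_le_pow_pred_mul_succ q r

theorem dArith_mul {a b : ℕ} (hab : a.Coprime b) : dArith (a * b) = dArith a * dArith b := by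
  have hprod (m : ℕ) : dArith m = m.factorization.prod fun q r => q ^ (r - 1) * (q + 1) := by
    rw [dArith, Finsupp.prod, Nat.support_factorization]
  simp only [hprod, Nat.factorization_mul_of_coprime hab]
  exact Finsupp.prod_add_index_of_disjoint
    (by simpa only [Nat.support_factorization] using hab.disjoint_primeFactors) _

theorem dArith_prime_pow {p n : ℕ} (hp : p.Prime) (hn : n ≠ 0) :
    dArith (p ^ n) = p ^ (n - 1) * (p + 1) := by
  rw [dArith, Nat.primeFactors_prime_pow hn hp, prod_singleton, hp.factorization_pow,
    Finsupp.single_eq_same]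

theorem prod_sq_mul_le_dArith_sq {m : ℕ} (hm : m ≠ 0) (e : ℕ → ℕ → ℕ)
    (he : ∀ q r, q.Prime → 1 ≤ r → e q r ^ 2 * q ^ r ≤ (q ^ (r - 1) * (q + 1)) ^ 2) :
    (∏ q ∈ m.primeFactors, e q (m.factorization q)) ^ 2 * m ≤ dArith m ^ 2 := by
  have h := prod_primeFactors_le_prod m he
  rwa [prod_mul_distrib, prod_pow, prod_pow, ← Nat.prod_primeFactors_pow_factorization hm] at h

theorem four_mul_pow_le_sq (q r : ℕ) (hr : 1 ≤ r) :
    4 * q ^ r ≤ (q ^ (r - 1) * (q + 1)) ^ 2 := by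
  have hx : q ^ (r - 1) ≤ (q ^ (r - 1)) ^ 2 := by nlinarith [sq_nonneg (q ^ (r - 1))]
  have hq : 4 * q ≤ (q + 1) ^ 2 := by nlinarith [sq_nonneg ((q:ℤ) - 1)]
  calc 4 * q ^ r = q ^ (r - 1) * (4 * q) := by
        rw [mul_left_comm, ← pow_succ, Nat.sub_add_cancel hr]
    _ ≤ (q ^ (r - 1)) ^ 2 * (q + 1) ^ 2 := Nat.mul_le_mul hx hq
    _ = (q ^ (r - 1) * (q + 1)) ^ 2 := (mul_pow _ _ _).symm

theorem sq_mul_pow_le_sq_of_le_two {f : ℕ} (hf : f ≤ 2) (q r : ℕ) (hr : 1 ≤ r) :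
    f ^ 2 * q ^ r ≤ (q ^ (r - 1) * (q + 1)) ^ 2 :=
  le_trans (Nat.mul_le_mul_right _ (by nlinarith)) (four_mul_pow_le_sq q r hr)

theorem toNat_one_add_jacobiSym_le_two (a : ℤ) (q : ℕ) : (1 + jacobiSym a q).toNat ≤ 2 := by
  rcases jacobiSym.trichotomy a q with h | h | h <;> simp [h]

theorem eps2_sq_mul_le {m : ℕ} (hm : m ≠ 0) : eps2 m ^ 2 * m ≤ dArith m ^ 2 :=
  prod_sq_mul_le_dArith_sq hm
    (fun q r => if q = 2 ∧ 2 ≤ r then 0 else (1 + jacobiSym (-1) q).toNat)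
    fun q r _ hr => sq_mul_pow_le_sq_of_le_two
      (by split_ifs; exacts [zero_le_two, toNat_one_add_jacobiSym_le_two _ _]) q r hr

theorem eps3_sq_mul_le {m : ℕ} (hm : m ≠ 0) : eps3 m ^ 2 * m ≤ dArith m ^ 2 :=
  prod_sq_mul_le_dArith_sq hm
    (fun q r => if q = 3 ∧ 2 ≤ r then 0 else if q = 2 then 0 else (1 + jacobiSym (-3) q).toNat)
    fun q r _ hr => sq_mul_pow_le_sq_of_le_two
      (by split_ifs; exacts [zero_le_two, zero_le_two, toNat_one_add_jacobiSym_le_two _ _]) q r hr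

theorem epsInf_sq_mul_le {m : ℕ} (hm : m ≠ 0) : epsInf m ^ 2 * m ≤ dArith m ^ 2 := by
  refine prod_sq_mul_le_dArith_sq hm
    (fun q r => if Even r then q ^ (r / 2 - 1) * (q + 1) else 2 * q ^ ((r - 1) / 2))
    fun q r _ hr => ?_
  split_ifs with h
  · obtain ⟨k, rfl⟩ := h
    have hk : 1 ≤ k := by omega
    apply le_of_eq
    rw [show (k + k) / 2 - 1 = k - 1 by omega, show k + k - 1 = (k - 1) + k by omega]
    ring
  · obtain ⟨k, rfl⟩ := Nat.not_even_iff_odd.mp h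
    rw [show (2 * k + 1 - 1) / 2 = k by omega, show 2 * k + 1 - 1 = 2 * k by omega]
    have := four_mul_pow_le_sq q 1 le_rfl
    simp only [tsub_self, pow_zero, one_mul, pow_one] at this
    calc (2 * q ^ k) ^ 2 * q ^ (2 * k + 1) = (q ^ (2 * k)) ^ 2 * (4 * q) := by ring
      _ ≤ (q ^ (2 * k)) ^ 2 * (q + 1) ^ 2 := Nat.mul_le_mul_left _ this
      _ = (q ^ (2 * k) * (q + 1)) ^ 2 := by ring

theorem mul_le_of_sq_mul_le {e d m k : ℕ} (hk : k ^ 2 ≤ m) (h : e ^ 2 * m ≤ d ^ 2) :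
    k * e ≤ d :=
  (Nat.pow_le_pow_iff_left two_ne_zero).mp <| by
    rw [mul_pow, mul_comm]; exact (Nat.mul_le_mul_left _ hk).trans h

theorem cast_le_div_sqrt_of_sq_mul_le {e d m : ℕ} (hm : m ≠ 0) (h : e ^ 2 * m ≤ d ^ 2) :
    (e : ℝ) ≤ d / √m := by
  rw [le_div_iff₀ (by positivity), ← Real.sqrt_sq (Nat.cast_nonneg e),
    ← Real.sqrt_mul (by positivity), ← Real.sqrt_sq (Nat.cast_nonneg d)]
  exact Real.sqrt_le_sqrt (by exact_mod_cast h)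

theorem dArith_div_le_genusX0 {N : ℕ} (hN : 26 ^ 2 ≤ N) :
    (dArith N : ℚ) / 24 ≤ genusX0 N := by
  have hN0 : N ≠ 0 := by omega
  have h2 : ((26 * eps2 N : ℕ) : ℚ) ≤ dArith N := by
    exact_mod_cast mul_le_of_sq_mul_le hN (eps2_sq_mul_le hN0)
  have h3 : ((26 * eps3 N : ℕ) : ℚ) ≤ dArith N := by
    exact_mod_cast mul_le_of_sq_mul_le hN (eps3_sq_mul_le hN0)
  have hI : ((26 * epsInf N : ℕ) : ℚ) ≤ dArith N := by
    exact_mod_cast mul_le_of_sq_mul_le hN (epsInf_sq_mul_le hN0)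
  push_cast at h2 h3 hI
  rw [genusX0]
  linarith

theorem abs_mul_le_mul_of_abs_le {a b x y : ℝ} (ha : |a| ≤ x) (hb : |b| ≤ y) :
    |a * b| ≤ x * y := by
  rw [abs_mul]
  exact mul_le_mul ha hb (abs_nonneg _) ((abs_nonneg _).trans ha)

theorem abs_fCorr_linear_term_le {n P D η dM e2 e3 e3M c : ℝ} (hn : 1 ≤ n) (hP : 2 ≤ P)
    (hη : 1 ≤ η) (hD : 0 ≤ D) (hPD : P - 1 ≤ D) (hdMP : dM * (P + 1) ≤ D)
    (he2 : e2 ∈ Set.Icc 0 η) (he3 : e3 ∈ Set.Icc 0 η) (he3M : e3M ∈ Set.Icc 0 dM)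
    (hc : |c| ≤ 4 * e3M + 36) :
    |(3 * (e2 + 2 * e3 - 4) * n - 2 * e3 + c) * D * (P - 1)| ≤
      23 * (n * (P - 1)) * D * η + 40 * D ^ 2 := by
  obtain ⟨he2, he2'⟩ := he2
  obtain ⟨he3, he3'⟩ := he3
  obtain ⟨he3M, he3M'⟩ := he3M
  have hc' := abs_le.mp hc
  have h : |3 * (e2 + 2 * e3 - 4) * n - 2 * e3 + c| ≤ 21 * n * η + 2 * η + 4 * e3M + 36 :=
    abs_le.mpr ⟨by nlinarith, by nlinarith⟩
  refine (abs_mul_le_mul_of_abs_le (abs_mul_le_mul_of_abs_le h (abs_of_nonneg hD).le)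
    (abs_of_nonneg (by linarith : 0 ≤ P - 1)).le).trans ?_
  have hPu : P - 1 ≤ n * (P - 1) := by nlinarith
  have he3MP : e3M * (P - 1) ≤ dM * (P + 1) :=
    mul_le_mul he3M' (by linarith) (by linarith) (by linarith)
  nlinarith [mul_le_mul_of_nonneg_right hPu (by positivity : 0 ≤ D * η),
    mul_le_mul_of_nonneg_right hPD hD, mul_le_mul_of_nonneg_right he3MP hD]

theorem abs_fCorr_quadratic_eps_term_le {u D η dM e2 e3 e2M e3M : ℝ} (hu : 1 ≤ u) (hD : 1 ≤ D)
    (hηD : η ≤ D) (hdMD : dM ≤ D) (he2 : e2 ∈ Set.Icc 0 η) (he3 : e3 ∈ Set.Icc 0 η)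
    (he2M : e2M ∈ Set.Icc 0 dM) (he3M : e3M ∈ Set.Icc 0 dM) :
    |2 * (u + 2) * (9 * e2 * (e2M - 4) + 16 * e3 * (e3M - 3) + 12 * e2 * e3)| ≤
      6 * u * (121 * D * η) := by
  obtain ⟨he2, he2'⟩ := he2
  obtain ⟨he3, he3'⟩ := he3
  obtain ⟨he2M, he2M'⟩ := he2M
  obtain ⟨he3M, he3M'⟩ := he3M
  have hη : 0 ≤ η := he2.trans he2'
  have h2 := mul_le_mul he2' (he2M'.trans hdMD) he2M hη
  have h3 := mul_le_mul he3' (he3M'.trans hdMD) he3M hη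
  have h23 := mul_le_mul he2' (he3'.trans hηD) he3 hη
  have hηDη : η ≤ D * η := le_mul_of_one_le_left hη hD
  have := mul_nonneg he2 he2M
  have := mul_nonneg he3 he3M
  have := mul_nonneg he2 he3
  exact abs_mul_le_mul_of_abs_le (abs_le.mpr ⟨by linarith, by linarith⟩)
    (abs_le.mpr ⟨by linarith, by linarith⟩)

/-- `fCorr` with `D = d(N)`, `X = p^(n-1)`, `P = p`, `dM = d(M)`, the values of `ε₂, ε₃, ε_∞`
at `N` and at `M`, and `c = 2(1 + (-1)^n)(ξ(-3) ε₃(M) - 9 δ_{M,1})`; `η` plays the role of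
`d(N) / √N`, which bounds `ε₂(N), ε₃(N), ε_∞(N)`. -/
theorem abs_fCorr_expr_le {D η n P X dM e2 e3 eI e2M e3M eIM c : ℝ}
    (hD : D = X * (P + 1) * dM) (hX : 1 ≤ X) (hdM : 1 ≤ dM) (hP : 2 ≤ P) (hn : 1 ≤ n)
    (hη : 1 ≤ η) (hηD : η ≤ D)
    (he2 : e2 ∈ Set.Icc 0 η) (he3 : e3 ∈ Set.Icc 0 η) (heI : eI ∈ Set.Icc 0 η)
    (he2M : e2M ∈ Set.Icc 0 dM) (he3M : e3M ∈ Set.Icc 0 dM) (heIM : eIM ∈ Set.Icc 0 dM)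
    (hc : |c| ≤ 4 * e3M + 36) :
    |2 * D ^ 2 - 8 * D * dM * (X - 1) - 6 * (n * (P - 1) - 4) * D * eI - 96 * D * eIM
      - (3 * (e2 + 2 * e3 - 4) * n - 2 * e3 + c) * D * (P - 1)
      + 4 * (12 - 3 * e2 - 4 * e3) * D + 144 * (X * (P + 1)) * eIM ^ 2
      + 12 * (n * (P - 1) + 2) * (3 * e2 + 4 * e3 - 12) * eI
      + 2 * (n * (P - 1) + 2) * (9 * e2 * (e2M - 4) + 16 * e3 * (e3M - 3) + 12 * e2 * e3)|
      ≤ 1500 * D * (D + n * (P - 1) * η) := by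
  obtain ⟨he2, he2'⟩ := he2
  obtain ⟨he3, he3'⟩ := he3
  obtain ⟨heI, heI'⟩ := heI
  obtain ⟨he2M, he2M'⟩ := he2M
  obtain ⟨he3M, he3M'⟩ := he3M
  obtain ⟨heIM, heIM'⟩ := heIM
  have hu : 1 ≤ n * (P - 1) := by nlinarith
  have hD1 : 1 ≤ D := hη.trans hηD
  have hD0 : 0 ≤ D := by linarith
  have hXdM : X * dM ≤ D := by
    rw [hD]; nlinarith [mul_nonneg (by linarith : 0 ≤ X) (by linarith : 0 ≤ dM)]
  have hdMP : dM * (P + 1) ≤ D := by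
    rw [hD]; nlinarith [mul_nonneg (by linarith : 0 ≤ P + 1) (by linarith : 0 ≤ dM)]
  have hdMD : dM ≤ D := by nlinarith
  have hPD : P - 1 ≤ D := by nlinarith
  have habsD : |D| ≤ D := (abs_of_nonneg hD0).le
  have habseI : |eI| ≤ η := by rwa [abs_of_nonneg heI]
  have t2 : |8 * D * dM * (X - 1)| ≤ 8 * D ^ 2 := by
    rw [abs_of_nonneg (by positivity)]
    nlinarith
  have t3 : |6 * (n * (P - 1) - 4) * D * eI| ≤ 30 * (n * (P - 1)) * D * η :=
    abs_mul_le_mul_of_abs_le (abs_mul_le_mul_of_abs_le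
      (abs_le.mpr ⟨by linarith, by linarith⟩) habsD) habseI
  have t4 : |96 * D * eIM| ≤ 96 * D ^ 2 := by
    rw [abs_of_nonneg (by positivity)]
    nlinarith
  have t5 := abs_fCorr_linear_term_le hn hP hη hD0 hPD hdMP ⟨he2, he2'⟩ ⟨he3, he3'⟩
    ⟨he3M, he3M'⟩ hc
  have t6 : |4 * (12 - 3 * e2 - 4 * e3) * D| ≤ 76 * D * D :=
    abs_mul_le_mul_of_abs_le (abs_le.mpr ⟨by linarith, by linarith⟩) habsD
  have t7 : |144 * (X * (P + 1)) * eIM ^ 2| ≤ 144 * D ^ 2 := by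
    have hXP : 0 ≤ X * (P + 1) := by positivity
    rw [abs_of_nonneg (by positivity), mul_assoc]
    calc 144 * (X * (P + 1) * eIM ^ 2) ≤ 144 * (X * (P + 1) * dM ^ 2) := by gcongr
      _ = 144 * (D * dM) := by rw [hD]; ring
      _ ≤ 144 * D ^ 2 := by rw [sq]; gcongr
  have t8 : |12 * (n * (P - 1) + 2) * (3 * e2 + 4 * e3 - 12) * eI| ≤
      36 * (n * (P - 1)) * (19 * D) * η :=
    abs_mul_le_mul_of_abs_le (abs_mul_le_mul_of_abs_le
      (abs_le.mpr ⟨by linarith, by linarith⟩) (abs_le.mpr ⟨by linarith, by linarith⟩))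
      habseI
  have t9 := abs_fCorr_quadratic_eps_term_le hu hD1 hηD hdMD ⟨he2, he2'⟩ ⟨he3, he3'⟩
    ⟨he2M, he2M'⟩ ⟨he3M, he3M'⟩
  have hDuη : 0 ≤ D * (n * (P - 1)) * η := by positivity
  rw [abs_le]
  constructor <;> linarith [abs_le.mp t2, abs_le.mp t3, abs_le.mp t4, abs_le.mp t5, abs_le.mp t6,
    abs_le.mp t7, abs_le.mp t8, abs_le.mp t9, sq_nonneg D]

theorem abs_parity_term_le (n : ℕ) (b₁ b₂ : Prop) [Decidable b₁] [Decidable b₂] {e : ℝ}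
    (he : 0 ≤ e) :
    |2 * (1 + (-1) ^ n) * ((if b₁ then 0 else 1) * e - 9 * (if b₂ then 1 else 0))| ≤
      4 * e + 36 := by
  have hsign : |(1 : ℝ) + (-1) ^ n| ≤ 2 := by
    rcases neg_one_pow_eq_or ℝ n with h | h <;> norm_num [h]
  have h : |(if b₁ then 0 else 1) * e - 9 * (if b₂ then 1 else 0)| ≤ e + 9 := by
    split_ifs <;> exact abs_le.mpr ⟨by linarith, by linarith⟩
  convert abs_mul_le_mul_of_abs_le (abs_mul_le_mul_of_abs_le abs_two.le hsign) h using 1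
  ring

theorem abs_fCorr_le {p n M : ℕ} (hp : p.Prime) (hn : n ≠ 0) (hM : M ≠ 0)
    (hpM : p.Coprime M) :
    |((fCorr p n M : ℚ) : ℝ)| ≤ 1500 * dArith (p ^ n * M) *
      (dArith (p ^ n * M) + n * (p - 1) * (dArith (p ^ n * M) / √(p ^ n * M : ℕ))) := by
  set N := p ^ n * M
  have hN0 : N ≠ 0 := mul_ne_zero (pow_ne_zero _ hp.ne_zero) hM
  have hdpn : (dArith (p ^ n) : ℝ) = p ^ (n - 1) * (p + 1) := by
    rw [dArith_prime_pow hp hn]; push_cast; ring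
  have hD : (dArith N : ℝ) = p ^ (n - 1) * (p + 1) * dArith M := by
    rw [dArith_mul (hpM.pow_left n), Nat.cast_mul, hdpn]
  have hdM1 : (1 : ℝ) ≤ dArith M := by exact_mod_cast dArith_pos M
  have hN1 : (1 : ℝ) ≤ N := by exact_mod_cast Nat.one_le_iff_ne_zero.mpr hN0
  have hsqrt : 1 ≤ √(N : ℝ) := Real.one_le_sqrt.mpr hN1
  have hsqrtD : √N ≤ dArith N :=
    (Real.sqrt_le_self_iff.mpr (Or.inr hN1)).trans (by exact_mod_cast le_dArith hN0)
  have hε {e : ℕ} (he : e ^ 2 * N ≤ dArith N ^ 2) :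
      (e : ℝ) ∈ Set.Icc 0 (dArith N / √N) :=
    ⟨Nat.cast_nonneg e, cast_le_div_sqrt_of_sq_mul_le hN0 he⟩
  have hεM {e : ℕ} (he : e ^ 2 * M ≤ dArith M ^ 2) :
      (e : ℝ) ∈ Set.Icc 0 (dArith M : ℝ) := by
    refine ⟨Nat.cast_nonneg e, ?_⟩
    have := mul_le_of_sq_mul_le (k := 1) (by rw [one_pow]; exact Nat.one_le_iff_ne_zero.mpr hM) he
    rw [one_mul] at this
    exact_mod_cast this
  have key := abs_fCorr_expr_le (n := n) hD (one_le_pow₀ (by exact_mod_cast hp.one_lt.le)) hdM1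
    (by exact_mod_cast hp.two_le) (by exact_mod_cast Nat.one_le_iff_ne_zero.mpr hn)
    ((one_le_div (by positivity)).mpr hsqrtD) (div_le_self (by positivity) hsqrt)
    (hε (eps2_sq_mul_le hN0)) (hε (eps3_sq_mul_le hN0)) (hε (epsInf_sq_mul_le hN0))
    (hεM (eps2_sq_mul_le hM)) (hεM (eps3_sq_mul_le hM)) (hεM (epsInf_sq_mul_le hM))
    (abs_parity_term_le n (p % 3 = 1) (M = 1) (Nat.cast_nonneg _))
  refine le_of_eq_of_le (congrArg _ ?_) key
  simp only [fCorr]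
  push_cast [apply_ite ((↑) : ℚ → ℝ)]
  rw [hdpn]

theorem log_eq_sum_factorization_mul_log (N : ℕ) :
    Real.log N = ∑ p ∈ N.primeFactors, N.factorization p * Real.log p := by
  rw [Real.log_nat_eq_sum_factorization, Finsupp.sum, Nat.support_factorization]

theorem sum_log_div_sub_one_le (N : ℕ) {K : ℕ} (hK : 0 < K) :
    ∑ p ∈ N.primeFactors, Real.log p / (p - 1) ≤ K + Real.log N / K := by
  rw [← sum_filter_add_sum_filter_not _ (· ≤ K)]
  gcongr
  · calc ∑ p ∈ N.primeFactors with p ≤ K, Real.log p / (p - 1)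
        ≤ ∑ p ∈ N.primeFactors with p ≤ K, 1 := sum_le_sum fun p hp => by
          have hp1 : (1 : ℝ) < p := by
            exact_mod_cast (Nat.prime_of_mem_primeFactors (mem_filter.mp hp).1).one_lt
          exact (div_le_one (by linarith)).mpr (Real.log_le_sub_one_of_pos (by linarith))
      _ ≤ K := by
        rw [sum_const, nsmul_one]
        refine Nat.cast_le.mpr ((card_le_card fun p hp => ?_).trans (Nat.card_Icc 1 K).le)
        obtain ⟨hp, hpK⟩ := mem_filter.mp hp
        exact mem_Icc.mpr ⟨(Nat.prime_of_mem_primeFactors hp).one_le, hpK⟩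
  · calc ∑ p ∈ N.primeFactors with ¬p ≤ K, Real.log p / (p - 1)
        ≤ ∑ p ∈ N.primeFactors with ¬p ≤ K, N.factorization p * Real.log p / K :=
          sum_le_sum fun p hp => by
            obtain ⟨hp, hpK⟩ := mem_filter.mp hp
            obtain ⟨hpp, hd, hN⟩ := Nat.mem_primeFactors.mp hp
            have hlog : 0 ≤ Real.log p := Real.log_nonneg (by exact_mod_cast hpp.one_le)
            have hn : (1 : ℝ) ≤ N.factorization p := by
              exact_mod_cast hpp.factorization_pos_of_dvd hN hd
            have hKp : (K : ℝ) ≤ p - 1 := by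
              rw [le_sub_iff_add_le]; exact_mod_cast Nat.succ_le_of_lt (not_le.mp hpK)
            exact div_le_div₀ (by positivity) (le_mul_of_one_le_left hlog hn) (by positivity) hKp
      _ ≤ ∑ p ∈ N.primeFactors, N.factorization p * Real.log p / K :=
          sum_le_sum_of_subset_of_nonneg (filter_subset _ _) fun p hp _ => by
            have := (Nat.prime_of_mem_primeFactors hp).one_le
            positivity
      _ = Real.log N / K := by rw [← sum_div, log_eq_sum_factorization_mul_log]

theorem tendsto_sum_log_div_sub_one_div_log :
    Tendsto (fun N : ℕ => (∑ p ∈ N.primeFactors, Real.log p / (p - 1)) / Real.log N)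
      atTop (nhds 0) := by
  rw [Metric.tendsto_nhds]
  intro ε hε
  obtain ⟨K, hK⟩ := exists_nat_gt (2 / ε)
  have hK0 : (0 : ℝ) < K := (by positivity : (0 : ℝ) < 2 / ε).trans hK
  have hlog : Tendsto (fun N : ℕ => Real.log N) atTop atTop :=
    Real.tendsto_log_atTop.comp tendsto_natCast_atTop_atTop
  filter_upwards [hlog.eventually_gt_atTop (2 * K / ε)] with N hN
  have hlog0 : 0 < Real.log N := lt_of_le_of_lt (by positivity) hN
  have hS0 : 0 ≤ ∑ p ∈ N.primeFactors, Real.log p / (p - 1) := sum_nonneg fun p hp => by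
    have hp1 : (1 : ℝ) < p := by exact_mod_cast (Nat.prime_of_mem_primeFactors hp).one_lt
    exact div_nonneg (Real.log_nonneg hp1.le) (by linarith)
  rw [Real.dist_eq, sub_zero, abs_of_nonneg (by positivity), div_lt_iff₀ hlog0]
  calc _ ≤ K + Real.log N / K := sum_log_div_sub_one_le N (Nat.cast_pos.mp hK0)
    _ < ε / 2 * Real.log N + ε / 2 * Real.log N := by
      gcongr
      · linarith [(div_lt_iff₀ hε).mp hN]
      · rw [div_lt_iff₀ hK0]
        nlinarith [mul_lt_mul_of_pos_left ((div_lt_iff₀ hε).mp hK) hlog0]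
    _ = ε * Real.log N := by ring

noncomputable def correctionSum (N : ℕ) : ℝ :=
  ∑ p ∈ N.primeFactors,
    ((fCorr p (N.factorization p) (N / p ^ N.factorization p) : ℚ) : ℝ) * Real.log p
      / (12 * (dArith N : ℝ) * ((p : ℝ) - 1))

theorem abs_correctionSum_le {N : ℕ} (hN : N ≠ 0) :
    |correctionSum N| ≤ 125 * dArith N *
      (∑ p ∈ N.primeFactors, Real.log p / (p - 1) + Real.log N / √N) := by
  have hD : (0 : ℝ) < dArith N := by exact_mod_cast dArith_pos N
  rw [correctionSum, log_eq_sum_factorization_mul_log, sum_div, ← sum_add_distrib, mul_sum]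
  refine (abs_sum_le_sum_abs _ _).trans (sum_le_sum fun p hp => ?_)
  obtain ⟨hpp, hd, -⟩ := Nat.mem_primeFactors.mp hp
  have hn : N.factorization p ≠ 0 := (hpp.factorization_pos_of_dvd hN hd).ne'
  have hNpM := Nat.ordProj_mul_ordCompl_eq_self N p
  have hM : N / p ^ N.factorization p ≠ 0 := fun h => hN (by rw [← hNpM, h, mul_zero])
  have hf := abs_fCorr_le hpp hn hM (Nat.coprime_ordCompl hpp hN)
  rw [hNpM] at hf
  have hp1 : (0 : ℝ) < p - 1 := by
    have : (1 : ℝ) < p := by exact_mod_cast hpp.one_lt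
    linarith
  have hlog : 0 ≤ Real.log p := Real.log_nonneg (by linarith)
  rw [abs_div, abs_mul, abs_of_nonneg hlog, abs_of_pos (mul_pos (by positivity) hp1)]
  calc _ ≤ 1500 * dArith N * (dArith N + N.factorization p * (p - 1) * (dArith N / √N))
        * Real.log p / (12 * dArith N * (p - 1)) := by gcongr
    _ = _ := by field_simp; ring

theorem abs_correctionSum_div_le {N : ℕ} (hN : 26 ^ 2 ≤ N) :
    |correctionSum N / ((genusX0 N : ℝ) * Real.log N)| ≤
      3000 * ((∑ p ∈ N.primeFactors, Real.log p / (p - 1)) / Real.log N + (√N)⁻¹) := by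
  have hD : (0 : ℝ) < dArith N := by exact_mod_cast dArith_pos N
  have hlog : 0 < Real.log N := Real.log_pos (by exact_mod_cast (by omega : 1 < N))
  have hg : (dArith N : ℝ) / 24 ≤ genusX0 N := by
    have := Rat.cast_le (K := ℝ) |>.mpr (dArith_div_le_genusX0 hN)
    push_cast at this
    exact this
  have hsqrt : 0 < √(N : ℝ) := Real.sqrt_pos.mpr (by exact_mod_cast (by omega : 0 < N))
  have hS := abs_correctionSum_le (N := N) (by omega)
  rw [abs_div, abs_of_pos (mul_pos ((by positivity : (0 : ℝ) < dArith N / 24).trans_le hg) hlog)]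
  calc _ ≤ 125 * dArith N * (∑ p ∈ N.primeFactors, Real.log p / (p - 1) + Real.log N / √N)
        / (dArith N / 24 * Real.log N) := by
        gcongr
        exact (abs_nonneg _).trans hS
    _ = _ := by field_simp; ring

theorem stmt_9 :
    Tendsto (fun N : ℕ =>
      (∑ p ∈ N.primeFactors,
        ((fCorr p (N.factorization p) (N / p ^ N.factorization p) : ℚ) : ℝ) * Real.log p
          / (12 * (dArith N : ℝ) * ((p : ℝ) - 1)))
      / ((genusX0 N : ℝ) * Real.log N))
      (atTop ⊓ 𝓟 {N : ℕ | 1 < N ∧ Nat.Coprime N 6}) (nhds 0) := by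
  have hbound : Tendsto (fun N : ℕ =>
      3000 * ((∑ p ∈ N.primeFactors, Real.log p / (p - 1)) / Real.log N + (√N)⁻¹))
      atTop (nhds 0) := by
    simpa using (tendsto_sum_log_div_sub_one_div_log.add (tendsto_inv_atTop_zero.comp
      (Real.tendsto_sqrt_atTop.comp tendsto_natCast_atTop_atTop))).const_mul 3000
  refine (squeeze_zero_norm' ?_ hbound).mono_left inf_le_left
  filter_upwards [eventually_ge_atTop (26 ^ 2)] with N hN
  exact abs_correctionSum_div_le hN
end

section
/- Let p > 3 be prime, let n ≥ 2 and 1 ≤ a ≤ n−1 be integers, and let M ≥ 1 satisfy gcd(M, 6p) = 1. Then d(M)·p^{|n−2a|}/6 + ε₂(M)/2 + ε₃(M)/3 + (1−(−1)ⁿ)·ξ(−3)·ε₃(M)/6 = 1 if and only if M = 1 and n = 2a. (Equivalently, the interior Igusa component C′_a of the special fibre of the Edixhoven model of X₀(pⁿM) has self-intersection −1 exactly when M = 1 and a = n/2.) -/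
open Finset Filter

/-!
If `M ≠ 1` then every prime factor of `M` is at least `5`, so `d(M) ≥ 6` and the first term
alone is at least `1`; equality forces `d(M) = 6`, i.e. `M = 5`, and `ε₂(M) = 0`, but
`ε₂(5) = 2`. If `M = 1` the constant terms add up to `5/6`, so `p^{|n−2a|} ≤ 1`, i.e. `n = 2a`.
-/

lemma dArith_one : dArith 1 = 1 := by simp [dArith]

lemma eps2_one : eps2 1 = 1 := by simp [eps2]

lemma eps3_one : eps3 1 = 1 := by simp [eps3]

lemma eps2_five : eps2 5 = 2 := by
  have h5 : Nat.primeFactors 5 = {5} := Nat.Prime.primeFactors (by norm_num)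
  rw [eps2, h5, prod_singleton, if_neg (by norm_num), jacobiSym.at_neg_one (by decide)]
  decide

lemma five_le_of_mem_primeFactors {m q : ℕ} (hm : m.Coprime 6) (hq : q ∈ m.primeFactors) :
    5 ≤ q := by
  have hqp := Nat.prime_of_mem_primeFactors hq
  have hq6 : ¬ q ∣ 6 := (Nat.Prime.coprime_iff_not_dvd hqp).mp
    (hm.coprime_dvd_left (Nat.dvd_of_mem_primeFactors hq))
  by_contra! hlt
  interval_cases q <;> revert hqp hq6 <;> decide

lemma six_le_dArith_factor {q : ℕ} (hq : 5 ≤ q) (e : ℕ) : 6 ≤ q ^ e * (q + 1) :=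
  (show 6 ≤ q + 1 by omega).trans (Nat.le_mul_of_pos_left _ (by positivity))

lemma dArith_factor_le {m q : ℕ} (hq : q ∈ m.primeFactors) :
    q ^ (m.factorization q - 1) * (q + 1) ≤ dArith m := by
  unfold dArith
  refine single_le_prod' (f := fun q => q ^ (m.factorization q - 1) * (q + 1)) (fun q hq => ?_) hq
  exact Nat.mul_pos (pow_pos (Nat.prime_of_mem_primeFactors hq).pos _) q.succ_pos

lemma six_le_dArith {m : ℕ} (hm : m.Coprime 6) (h1 : m ≠ 1) : 6 ≤ dArith m := by
  have hm0 : m ≠ 0 := by rintro rfl; norm_num at hm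
  obtain ⟨q, hq⟩ := Nat.nonempty_primeFactors.2 (by omega : 1 < m)
  exact (six_le_dArith_factor (five_le_of_mem_primeFactors hm hq) _).trans (dArith_factor_le hq)

lemma eq_five_of_dArith_eq_six {m : ℕ} (hm : m.Coprime 6) (h : dArith m = 6) : m = 5 := by
  have hm0 : m ≠ 0 := by rintro rfl; norm_num at hm
  have hm1 : m ≠ 1 := by rintro rfl; simp [dArith_one] at h
  have hfive : ∀ q ∈ m.primeFactors, q = 5 ∧ m.factorization q = 1 := by
    intro q hq
    have h5 := five_le_of_mem_primeFactors hm hq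
    have hle := (dArith_factor_le hq).trans h.le
    have hpow : q ^ (m.factorization q - 1) = 1 := by
      nlinarith [Nat.one_le_pow (m.factorization q - 1) q (by omega)]
    have hpos : 0 < m.factorization q := (Nat.prime_of_mem_primeFactors hq).factorization_pos_of_dvd
      hm0 (Nat.dvd_of_mem_primeFactors hq)
    refine ⟨by nlinarith, ?_⟩
    have hpred : m.factorization q - 1 = 0 := (Nat.pow_eq_one.1 hpow).resolve_left (by omega)
    omega
  obtain ⟨q, hq⟩ := Nat.nonempty_primeFactors.2 (by omega : 1 < m)
  obtain ⟨rfl, hexp⟩ := hfive q hq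
  have hsupp : m.primeFactors = {5} := eq_singleton_iff_unique_mem.2 ⟨hq, fun q hq => (hfive q hq).1⟩
  calc m = m.factorization.prod (· ^ ·) := (Nat.prod_factorization_pow_eq_self hm0).symm
    _ = 5 := by rw [Finsupp.prod, Nat.support_factorization, hsupp, prod_singleton, hexp, pow_one]

lemma eq_one_of_dArith_mul_div_six_add_eps2_le {m : ℕ} (hm : m.Coprime 6) {x : ℚ} (hx : 1 ≤ x)
    (h : (dArith m : ℚ) * x / 6 + (eps2 m : ℚ) / 2 ≤ 1) : m = 1 := by
  by_contra hm1
  have hd : (6 : ℚ) ≤ dArith m := by exact_mod_cast six_le_dArith hm hm1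
  have he2 : (0 : ℚ) ≤ eps2 m := (eps2 m).cast_nonneg
  have hd6 : (dArith m : ℚ) = 6 := by nlinarith
  have he2 : (eps2 m : ℚ) ≤ 0 := by nlinarith
  rw [eq_five_of_dArith_eq_six hm (by exact_mod_cast hd6), eps2_five] at he2
  norm_num at he2

lemma one_sub_neg_one_pow_nonneg {R : Type*} [Ring R] [PartialOrder R] [IsOrderedRing R] (n : ℕ) :
    0 ≤ 1 - (-1 : R) ^ n := by
  rcases neg_one_pow_eq_or R n with h | h <;> rw [h] <;> norm_num

theorem stmt_11_general (p n a M : ℕ) (hp : p.Prime) (hcop : Nat.Coprime M (6 * p)) :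
    (dArith M : ℚ) * (p : ℚ) ^ ((n : ℤ) - 2 * a).natAbs / 6 + (eps2 M : ℚ) / 2
        + (eps3 M : ℚ) / 3
        + (1 - (-1 : ℚ) ^ n) * (if p % 3 = 1 then (0 : ℚ) else 1) * (eps3 M : ℚ) / 6 = 1
      ↔ M = 1 ∧ n = 2 * a := by
  set K := ((n : ℤ) - 2 * a).natAbs
  have hcorr : 0 ≤ (1 - (-1 : ℚ) ^ n) * (if p % 3 = 1 then (0 : ℚ) else 1) * (eps3 M : ℚ) := by
    have := one_sub_neg_one_pow_nonneg (R := ℚ) n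
    positivity
  have hpK : (1 : ℚ) ≤ (p : ℚ) ^ K := one_le_pow₀ (by exact_mod_cast hp.one_le)
  constructor
  · intro h
    have hM1 : M = 1 := eq_one_of_dArith_mul_div_six_add_eps2_le
      (Nat.Coprime.coprime_mul_right_right hcop) hpK (by linarith [(eps3 M).cast_nonneg (α := ℚ)])
    subst hM1
    simp only [dArith_one, eps2_one, eps3_one, Nat.cast_one] at h hcorr
    have hpK1 : p ^ K = 1 := by exact_mod_cast le_antisymm (by linarith) hpK
    have hK : K = 0 := (Nat.pow_eq_one.1 hpK1).resolve_left hp.ne_one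
    exact ⟨rfl, by omega⟩
  · rintro ⟨rfl, rfl⟩
    have hK : K = 0 := by simp [K]
    norm_num [hK, dArith_one, eps2_one, eps3_one, pow_mul]

/-- Let `p > 3` be prime, `n ≥ 2`, `1 ≤ a ≤ n−1`, and `M ≥ 1` with `gcd(M, 6p) = 1`.  Then
`d(M)·p^{|n−2a|}/6 + ε₂(M)/2 + ε₃(M)/3 + (1−(−1)ⁿ)·ξ(−3)·ε₃(M)/6 = 1` if and only if
`M = 1` and `n = 2a`, where `ξ(−3) = 0` if `p ≡ 1 (mod 3)` and `ξ(−3) = 1` otherwise: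
the interior Igusa component `C′_a` of the special fibre of the Edixhoven model of
`X₀(pⁿM)` has self-intersection `−1` exactly when `M = 1` and `a = n/2`. -/
theorem stmt_11 (p n a M : ℕ) (hp : p.Prime) (hp3 : 3 < p) (hn : 2 ≤ n)
    (ha1 : 1 ≤ a) (ha2 : a ≤ n - 1) (hM : 1 ≤ M) (hcop : Nat.Coprime M (6 * p)) :
    (dArith M : ℚ) * (p : ℚ) ^ ((n : ℤ) - 2 * a).natAbs / 6 + (eps2 M : ℚ) / 2
        + (eps3 M : ℚ) / 3
        + (1 - (-1 : ℚ) ^ n) * (if p % 3 = 1 then (0 : ℚ) else 1) * (eps3 M : ℚ) / 6 = 1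
      ↔ M = 1 ∧ n = 2 * a :=
  stmt_11_general p n a M hp hcop
end

section
/- Let p > 3 be prime, let n ≥ 1 be an integer, and let M ≥ 1 satisfy gcd(M, 6p) = 1. Then d(M)·p^{n−1}(p−1)/12 + ξ(−1)·ε₂(M)/2 + (3−(−1)ⁿ)·ξ(−3)·ε₃(M)/6 = 1 if and only if M = 1, n = 1 and p ∈ {5, 7, 13}. (Equivalently, the Igusa components C′₀ and C′_n of the special fibre of the Edixhoven model of X₀(pⁿM) have self-intersection −1 exactly when N = pⁿM ∈ {5, 7, 13}.) -/
open Finset Filter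

lemma succ_le_dArith {M q : ℕ} (hM : M ≠ 0) (hq : q.Prime) (hqM : q ∣ M) : q + 1 ≤ dArith M := by
  have hfactor_pos : ∀ r ∈ M.primeFactors, 1 ≤ r ^ (M.factorization r - 1) * (r + 1) :=
    fun r hr => Nat.one_le_iff_ne_zero.2 <|
      mul_ne_zero (pow_ne_zero _ (Nat.prime_of_mem_primeFactors hr).ne_zero) r.succ_ne_zero
  calc q + 1 ≤ q ^ (M.factorization q - 1) * (q + 1) :=
        Nat.le_mul_of_pos_left _ (pow_pos hq.pos _)
    _ ≤ dArith M := single_le_prod' hfactor_pos (Nat.mem_primeFactors.2 ⟨hq, hqM, hM⟩)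

lemma six_le_dArith_s12 {M : ℕ} (hM0 : M ≠ 0) (hM1 : M ≠ 1) (hcop : M.Coprime 6) : 6 ≤ dArith M := by
  obtain ⟨q, hq, hqM⟩ := Nat.exists_prime_and_dvd hM1
  have hq6 : q.Coprime 6 := hcop.coprime_dvd_left hqM
  have hq5 : 5 ≤ q := hq.five_le_of_ne_two_of_ne_three
    (by rintro rfl; norm_num at hq6) (by rintro rfl; norm_num at hq6)
  have := succ_le_dArith hM0 hq hqM
  omega

/-- `−C′₀²` on the Edixhoven model of `X₀(pⁿM)`, with `ξ(−1)` and `ξ(−3)` written as `if`s. -/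
def negSelfIntersection (p n M : ℕ) : ℚ :=
  (dArith M : ℚ) * (p : ℚ) ^ (n - 1) * ((p : ℚ) - 1) / 12
    + (if p % 4 = 1 then (0 : ℚ) else 1) * (eps2 M : ℚ) / 2
    + (3 - (-1 : ℚ) ^ n) * (if p % 3 = 1 then (0 : ℚ) else 1) * (eps3 M : ℚ) / 6

lemma dArith_mul_le_negSelfIntersection (p n M : ℕ) :
    (dArith M : ℚ) * (p : ℚ) ^ (n - 1) * ((p : ℚ) - 1) / 12 ≤ negSelfIntersection p n M := by
  have hsign : (-1 : ℚ) ^ n ≤ 3 := by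
    rcases n.even_or_odd with h | h <;> norm_num [h.neg_one_pow]
  have hxi2 : (0 : ℚ) ≤ if p % 4 = 1 then 0 else 1 := by split_ifs <;> norm_num
  have hxi3 : (0 : ℚ) ≤ if p % 3 = 1 then 0 else 1 := by split_ifs <;> norm_num
  unfold negSelfIntersection
  have h2 := mul_nonneg hxi2 (Nat.cast_nonneg (α := ℚ) (eps2 M))
  have h3 := mul_nonneg (mul_nonneg (sub_nonneg.2 hsign) hxi3) (Nat.cast_nonneg (α := ℚ) (eps3 M))
  linarith

lemma level_eq_one_of_negSelfIntersection_le_one {p n M : ℕ} (hp : 5 ≤ p) (hM : M ≠ 0)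
    (hcop : M.Coprime 6) (h : negSelfIntersection p n M ≤ 1) : M = 1 := by
  by_contra hM1
  have hd : (6 : ℚ) ≤ dArith M := by exact_mod_cast six_le_dArith_s12 hM hM1 hcop
  have hpQ : (5 : ℚ) ≤ p := by exact_mod_cast hp
  have hpow : (1 : ℚ) ≤ (p : ℚ) ^ (n - 1) := one_le_pow₀ (by linarith)
  have hfirst := dArith_mul_le_negSelfIntersection p n M
  have hdp : (6 : ℚ) ≤ dArith M * (p : ℚ) ^ (n - 1) := by nlinarith
  nlinarith

lemma exponent_eq_one_of_negSelfIntersection_le_one {p n : ℕ} (hp : 5 ≤ p) (hn : n ≠ 0)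
    (h : negSelfIntersection p n 1 ≤ 1) : n = 1 := by
  by_contra hn1
  have hpQ : (5 : ℚ) ≤ p := by exact_mod_cast hp
  have hpow : (p : ℚ) ≤ (p : ℚ) ^ (n - 1) := le_self_pow₀ (by linarith) (by omega)
  have hfirst := dArith_mul_le_negSelfIntersection p n 1
  rw [dArith_one, Nat.cast_one, one_mul] at hfirst
  nlinarith

lemma negSelfIntersection_one_one_eq_one_iff (p : ℕ) :
    negSelfIntersection p 1 1 = 1 ↔ p ∈ ({5, 7, 13} : Set ℕ) := by
  simp only [Set.mem_insert_iff, Set.mem_singleton_iff]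
  constructor
  · intro h
    simp only [negSelfIntersection, dArith_one, eps2_one, eps3_one] at h
    have hp0 : (0 : ℚ) ≤ p := p.cast_nonneg
    have hpQ : (p : ℚ) = 5 ∨ (p : ℚ) = 7 ∨ (p : ℚ) = 13 := by
      split_ifs at h <;> norm_num at h
      · exact Or.inr (Or.inr (by linarith))
      · exact Or.inl (by linarith)
      · exact Or.inr (Or.inl (by linarith))
      · linarith
    exact_mod_cast hpQ
  · rintro (rfl | rfl | rfl) <;> norm_num [negSelfIntersection, dArith_one, eps2_one, eps3_one]

/-- Let `p > 3` be prime, `n ≥ 1`, and `M ≥ 1` with `gcd(M, 6p) = 1`.  Then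
`d(M)·p^{n−1}(p−1)/12 + ξ(−1)·ε₂(M)/2 + (3−(−1)ⁿ)·ξ(−3)·ε₃(M)/6 = 1` if and only if
`M = 1`, `n = 1` and `p ∈ {5, 7, 13}`, where `ξ(−1) = 0` if `p ≡ 1 (mod 4)` and `1`
otherwise, and `ξ(−3) = 0` if `p ≡ 1 (mod 3)` and `1` otherwise: the Igusa components
`C′₀` and `C′_n` of the special fibre of the Edixhoven model of `X₀(pⁿM)` have
self-intersection `−1` exactly when `N = pⁿM ∈ {5, 7, 13}`. -/
theorem stmt_12 (p n M : ℕ) (hp : p.Prime) (hp3 : 3 < p) (hn : 1 ≤ n)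
    (hM : 1 ≤ M) (hcop : Nat.Coprime M (6 * p)) :
    (dArith M : ℚ) * (p : ℚ) ^ (n - 1) * ((p : ℚ) - 1) / 12
        + (if p % 4 = 1 then (0 : ℚ) else 1) * (eps2 M : ℚ) / 2
        + (3 - (-1 : ℚ) ^ n) * (if p % 3 = 1 then (0 : ℚ) else 1) * (eps3 M : ℚ) / 6 = 1
      ↔ M = 1 ∧ n = 1 ∧ p ∈ ({5, 7, 13} : Set ℕ) := by
  have hp5 : 5 ≤ p := hp.five_le_of_ne_two_of_ne_three (by omega) (by omega)
  change negSelfIntersection p n M = 1 ↔ _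
  constructor
  · intro h
    obtain rfl : M = 1 :=
      level_eq_one_of_negSelfIntersection_le_one hp5 (by omega) hcop.coprime_mul_right_right h.le
    obtain rfl : n = 1 := exponent_eq_one_of_negSelfIntersection_le_one hp5 (by omega) h.le
    exact ⟨rfl, rfl, (negSelfIntersection_one_one_eq_one_iff p).1 h⟩
  · rintro ⟨rfl, rfl, hp⟩
    exact (negSelfIntersection_one_one_eq_one_iff p).2 hp
end
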